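/- Let c ≥ 2 and let (λ, μ) be a codimension-c decoration with k = ∑μⱼ > 1. Define the doubling D(λ, μ) = (rsort(λ, μ), (k)), the pair whose first partition is the sorted concatenation of λ and μ and whose second partition is (k). Let S' be the minimal tight double link of (λ, μ), with shifts p = (c-2)k+1-λ₁-…-λ_c and q = (c-2)(k+p)+1-(c-1)p-λ₁-…-λ_{c-1}-μ₁. Then there is a double link of D(λ, μ) in codimension c+1 (first at the sublist (λ₁,…,λ_c, μ₁), then at (λ₁+p',…,λ_{c-1}+p', μ₁+p', k) with p' = (c-1)k+1-λ₁-…-λ_c-μ₁) whose result equals D(S'). In particular, the identities p' = p + k - μ₁, q + μ₁ = λ_c, and p+q = p'+q' hold, where q' is the shift of the second link. -/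

import Mathlib

/-- Sort a list of integers in non-increasing order. -/
def rsort (l : List ℤ) : List ℤ := List.insertionSort (· ≥ ·) l

/-- Remove all non-positive parts (trailing zeros) from a partition. -/
def strip (l : List ℤ) : List ℤ := l.filter (fun x => 0 < x)

/-- The smallest minimal link of a codimension-`c` pair of partitions `(λ, μ)`:
choose the `c` largest parts of `λ` (padding with zeros if needed), shift them by
`p = (c-2)k + 1 - (λ₁ + ⋯ + λ_c)` where `k = ∑ μⱼ`, merge with `μ` and re-sort;
the other partition becomes `(λ_{c+1}, …, λ_b)`. -/
def smlink (c : ℕ) (P : List ℤ × List ℤ) : List ℤ × List ℤ :=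
  let p : ℤ := ((c : ℤ) - 2) * P.2.sum + 1 - (P.1.take c).sum
  (strip (rsort ((P.1.take c ++ List.replicate (c - P.1.length) 0).map (· + p) ++ P.2)),
   strip (P.1.drop c))

/-- The smallest minimal link of `P` produces nonnegative parts, i.e. `λ_c + p ≥ 0`. -/
def ValidLink (c : ℕ) (P : List ℤ × List ℤ) : Prop :=
  0 ≤ P.1.getD (c - 1) 0 + (((c : ℤ) - 2) * P.2.sum + 1 - (P.1.take c).sum)

/-- A partition: a non-increasing list of positive integers. -/
def IsPartition (l : List ℤ) : Prop := l.Pairwise (· ≥ ·) ∧ ∀ x ∈ l, 0 < x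

/-- A codimension-`c` decoration: a pair of partitions reachable to the complete
intersection pair `((1^c), (1))` by finitely many smallest minimal links, all of
whose intermediate links are valid (have nonnegative parts). -/
def IsDecoration (c : ℕ) (P : List ℤ × List ℤ) : Prop :=
  IsPartition P.1 ∧ IsPartition P.2 ∧
  ∃ n : ℕ, (∀ m < n, ValidLink c ((smlink c)^[m] P)) ∧
    (smlink c)^[n] P = (List.replicate c 1, [1])

/-- The link of a codimension-`c` pair `(λ, μ)` at a chosen sublist `λ'` of `c`
parts of `λ` (zeros allowed): with shift `p = (c-2)∑μ + 1 - ∑λ'ᵢ`, the new pair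
is `(rsort(λ'₁+p, …, λ'_c+p, μ₁, …, μ_t), λ \ λ')`. -/
def linkAt (c : ℕ) (lam' : List ℤ) (P : List ℤ × List ℤ) : List ℤ × List ℤ :=
  let p : ℤ := ((c : ℤ) - 2) * P.2.sum + 1 - lam'.sum
  (strip (rsort (lam'.map (· + p) ++ P.2)), strip (P.1.diff lam'))

/-- The minimal tight double link of a codimension-`c` pair `(λ, μ)`: first the
smallest minimal link (shift `p`), then the link at the sublist
`(λ₁+p, …, λ_{c-1}+p, μ₁)`. -/
def tightDouble (c : ℕ) (P : List ℤ × List ℤ) : List ℤ × List ℤ :=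
  linkAt c
    ((P.1.take (c - 1)).map
        (· + (((c : ℤ) - 2) * P.2.sum + 1 - (P.1.take c).sum)) ++ [P.2.getD 0 0])
    (smlink c P)

/-- The doubling of a pair `(λ, μ)`: `D(λ, μ) = (rsort(λ ∪ μ), (k))`, `k = ∑μⱼ`. -/
def doubling (P : List ℤ × List ℤ) : List ℤ × List ℤ :=
  (rsort (P.1 ++ P.2), [P.2.sum])

/- ### Auxiliary lemmas -/

lemma mem_strip {x : ℤ} {l : List ℤ} : x ∈ strip l ↔ x ∈ l ∧ 0 < x := by simp [strip]

lemma strip_append (a b : List ℤ) : strip (a ++ b) = strip a ++ strip b :=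
  List.filter_append _ _

lemma strip_eq_self {l : List ℤ} (h : ∀ x ∈ l, (0:ℤ) < x) : strip l = l :=
  List.filter_eq_self.mpr (fun a ha => decide_eq_true (h a ha))

lemma strip_sum {l : List ℤ} (h : ∀ x ∈ l, (0:ℤ) ≤ x) : (strip l).sum = l.sum := by
  induction l with
  | nil => rfl
  | cons a t ih =>
    have ha : (0:ℤ) ≤ a := h a (by simp)
    have ih' := ih (fun x hx => h x (by simp [hx]))
    rcases eq_or_lt_of_le ha with h0 | h0
    · simp [strip, List.filter_cons, ← h0] at ih' ⊢; omega
    · simp [strip, List.filter_cons, h0] at ih' ⊢; omega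

lemma rsort_perm (l : List ℤ) : (rsort l).Perm l := List.perm_insertionSort _ l

lemma rsort_sorted (l : List ℤ) : (rsort l).Pairwise (· ≥ ·) := List.pairwise_insertionSort _ l

lemma strip_perm {l₁ l₂ : List ℤ} (h : l₁.Perm l₂) : (strip l₁).Perm (strip l₂) :=
  h.filter _

lemma strip_sorted {l : List ℤ} (h : l.Pairwise (· ≥ ·)) : (strip l).Pairwise (· ≥ ·) :=
  h.filter _

lemma take_sum_succ (l : List ℤ) (n : ℕ) :
    (l.take (n+1)).sum = (l.take n).sum + l.getD n 0 := by
  rcases lt_or_ge n l.length with h | h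
  · rw [List.take_succ, List.getElem?_eq_getElem h, List.sum_append,
      List.getD_eq_getElem _ _ h]
    simp
  · rw [List.take_of_length_le h, List.take_of_length_le (le_trans h (by omega)),
      List.getD_eq_default _ _ h]
    simp

lemma map_add_sum (l : List ℤ) (a : ℤ) :
    (l.map (· + a)).sum = l.sum + l.length * a := by
  induction l with
  | nil => simp
  | cons x t ih => simp [ih]; ring

lemma length_le_sum (l : List ℤ) (h : ∀ x ∈ l, 0 < x) : (l.length : ℤ) ≤ l.sum := by
  induction l with
  | nil => simp
  | cons x t ih =>
    have := h x (by simp)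
    have := ih (fun y hy => h y (by simp [hy]))
    simp only [List.length_cons, List.sum_cons]
    push_cast
    omega

lemma sub_zeros : ∀ (t s : Multiset ℤ), (∀ a ∈ t, a = (0:ℤ)) → (0:ℤ) ∉ s → s - t = s := by
  intro t
  induction t using Multiset.induction_on with
  | empty => intro s _ _; simp
  | cons a t ih =>
    intro s ht hs
    rw [Multiset.sub_cons]
    have ha : a = 0 := ht a (Multiset.mem_cons_self a t)
    rw [ha, Multiset.erase_of_notMem hs]
    exact ih s (fun b hb => ht b (Multiset.mem_cons_of_mem hb)) hs

lemma smlink_def (c : ℕ) (P : List ℤ × List ℤ) :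
    smlink c P =
      (strip (rsort ((P.1.take c ++ List.replicate (c - P.1.length) 0).map
          (· + (((c : ℤ) - 2) * P.2.sum + 1 - (P.1.take c).sum)) ++ P.2)),
       strip (P.1.drop c)) := rfl

lemma linkAt_def (c : ℕ) (lam' : List ℤ) (P : List ℤ × List ℤ) :
    linkAt c lam' P =
      (strip (rsort (lam'.map (· + (((c : ℤ) - 2) * P.2.sum + 1 - lam'.sum)) ++ P.2)),
       strip (P.1.diff lam')) := rfl

lemma smlink_isPartition (c : ℕ) (P : List ℤ × List ℤ) (hP : IsPartition P.1) :
    IsPartition (smlink c P).1 ∧ IsPartition (smlink c P).2 := by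
  constructor
  · exact ⟨strip_sorted (rsort_sorted _), fun x hx => (mem_strip.mp hx).2⟩
  · refine ⟨?_, fun x hx => (mem_strip.mp hx).2⟩
    have : (P.1.drop c).Pairwise (· ≥ ·) := hP.1.sublist (List.drop_sublist _ _)
    exact strip_sorted this

lemma strip_singleton_pos {a : ℤ} (h : 0 < a) : strip [a] = [a] :=
  strip_eq_self (by intro x hx; rw [List.mem_singleton] at hx; exact hx ▸ h)

lemma strip_singleton_nonpos {a : ℤ} (h : a ≤ 0) : strip [a] = [] := by
  have : ¬ (0 < a) := not_lt.mpr h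
  simp [strip, this]

lemma mem_smlink_fst (c : ℕ) (P : List ℤ × List ℤ) (x : ℤ)
    (hx : x ∈ (P.1.take c ++ List.replicate (c - P.1.length) 0).map
        (· + (((c : ℤ) - 2) * P.2.sum + 1 - (P.1.take c).sum)) ++ P.2)
    (hpos : 0 < x) : x ∈ (smlink c P).1 := by
  have e1 : (smlink c P).1 = strip (rsort ((P.1.take c ++ List.replicate (c - P.1.length) 0).map
      (· + (((c : ℤ) - 2) * P.2.sum + 1 - (P.1.take c).sum)) ++ P.2)) := rfl
  rw [e1]
  exact mem_strip.mpr ⟨((rsort_perm _).mem_iff).mpr hx, hpos⟩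

lemma basege (c : ℕ) (P : List ℤ × List ℤ) (hP1 : IsPartition P.1) :
    ∀ x ∈ P.1.take c ++ List.replicate (c - P.1.length) 0, P.1.getD (c-1) 0 ≤ x := by
  intro x hx
  rcases List.mem_append.mp hx with hx | hx
  · rcases lt_or_ge (c-1) P.1.length with hl | hl
    · obtain ⟨i, hi, hix⟩ := List.mem_take_iff_getElem.mp hx
      rw [List.getD_eq_getElem _ _ hl, ← hix]
      have hic : i < c := lt_of_lt_of_le hi (min_le_left _ _)
      rcases eq_or_lt_of_le (show i ≤ c - 1 by omega) with he | hlt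
      · subst he; exact le_refl _
      · exact List.pairwise_iff_getElem.mp hP1.1 i (c-1) (by omega) hl hlt
    · rw [List.getD_eq_default _ _ hl]
      exact le_of_lt (hP1.2 x (List.take_subset _ _ hx))
  · have hx0 := List.eq_of_mem_replicate hx
    subst hx0
    have hlt : P.1.length < c := by
      by_contra hcon; push_neg at hcon
      rw [Nat.sub_eq_zero_of_le hcon] at hx; simp at hx
    rw [List.getD_eq_default _ _ (by omega)]

lemma smlink_sums (c : ℕ) (P : List ℤ × List ℤ) (hv : ValidLink c P)
    (hP1 : IsPartition P.1) (hP2 : IsPartition P.2) :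
    (smlink c P).1.sum
        = (P.1.take c).sum + c * (((c:ℤ)-2) * P.2.sum + 1 - (P.1.take c).sum) + P.2.sum
      ∧ (smlink c P).2.sum = P.1.sum - (P.1.take c).sum := by
  unfold ValidLink at hv
  have hge0 : ∀ x ∈ (P.1.take c ++ List.replicate (c - P.1.length) 0).map
      (· + (((c : ℤ) - 2) * P.2.sum + 1 - (P.1.take c).sum)) ++ P.2, (0:ℤ) ≤ x := by
    intro x hx
    rcases List.mem_append.mp hx with hx | hx
    · obtain ⟨y, hy, rfl⟩ := List.mem_map.mp hx
      have := basege c P hP1 y hy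
      linarith
    · exact le_of_lt (hP2.2 x hx)
  have e1 : (smlink c P).1 = strip (rsort ((P.1.take c ++ List.replicate (c - P.1.length) 0).map
      (· + (((c : ℤ) - 2) * P.2.sum + 1 - (P.1.take c).sum)) ++ P.2)) := rfl
  have e2 : (smlink c P).2 = strip (P.1.drop c) := rfl
  have hlen : (P.1.take c ++ List.replicate (c - P.1.length) 0).length = c := by
    rw [List.length_append, List.length_take, List.length_replicate]; omega
  have hbsum : (P.1.take c ++ List.replicate (c - P.1.length) 0).sum = (P.1.take c).sum := by
    rw [List.sum_append, List.sum_replicate]; simp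
  constructor
  · rw [e1, ((strip_perm (rsort_perm _)).sum_eq), strip_sum hge0,
      List.sum_append, map_add_sum, hlen, hbsum]
  · rw [e2, strip_eq_self (fun x hx => hP1.2 x (List.drop_subset _ _ hx))]
    have := List.sum_take_add_sum_drop P.1 c
    linarith

lemma inv_lemma (c : ℕ) (hc : 2 ≤ c) : ∀ (n : ℕ) (P : List ℤ × List ℤ),
    IsPartition P.1 → IsPartition P.2 →
    (∀ m < n, ValidLink c ((smlink c)^[m] P)) →
    (smlink c)^[n] P = (List.replicate c 1, [1]) →
    P.1.sum = ((c:ℤ) - 1) * P.2.sum + 1 ∧ (∀ x ∈ P.1, x ≤ P.2.sum) ∧ 1 ≤ P.2.sum := by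
  intro n
  induction n with
  | zero =>
    intro P _ _ _ hfin
    rw [Function.iterate_zero_apply] at hfin
    rw [hfin]
    refine ⟨?_, ?_, by simp⟩
    · simp [List.sum_replicate]
    · intro x hx
      simp only [List.eq_of_mem_replicate hx]
      simp
  | succ n ih =>
    intro P hP1 hP2 hchain hfin
    have hv : ValidLink c P := by simpa using hchain 0 (Nat.succ_pos n)
    have hvraw := hv
    unfold ValidLink at hvraw
    have hQpart := smlink_isPartition c P hP1
    have hchain' : ∀ m < n, ValidLink c ((smlink c)^[m] (smlink c P)) := by
      intro m hm
      have := hchain (m+1) (by omega)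
      rwa [Function.iterate_succ_apply] at this
    have hfin' : (smlink c)^[n] (smlink c P) = (List.replicate c 1, [1]) := by
      rw [← Function.iterate_succ_apply]; exact hfin
    obtain ⟨ha, hb, hk1⟩ := ih (smlink c P) hQpart.1 hQpart.2 hchain' hfin'
    obtain ⟨h1sum, h2sum⟩ := smlink_sums c P hv hP1 hP2
    have hc' : (2:ℤ) ≤ (c:ℤ) := by exact_mod_cast hc
    have hE : (P.1.take c).sum + c * (((c:ℤ)-2) * P.2.sum + 1 - (P.1.take c).sum) + P.2.sum
        = ((c:ℤ)-1) * (P.1.sum - (P.1.take c).sum) + 1 := by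
      rw [← h1sum, ← h2sum]; exact ha
    have hA : P.1.sum = ((c:ℤ)-1) * P.2.sum + 1 := by
      have hne : ((c:ℤ) - 1) ≠ 0 := by linarith
      refine mul_left_cancel₀ hne ?_
      linear_combination -hE
    have hdropsum : (P.1.drop c).sum = P.1.sum - (P.1.take c).sum := by
      have := List.sum_take_add_sum_drop P.1 c; linarith
    have hk1' : 1 ≤ P.1.sum - (P.1.take c).sum := by rw [← h2sum]; exact hk1
    have hlen : c < P.1.length := by
      by_contra hcon; push_neg at hcon
      rw [List.drop_eq_nil_of_le hcon] at hdropsum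
      simp at hdropsum
      linarith
    have htpos : (c:ℤ) ≤ (P.1.take c).sum := by
      have hlt : (P.1.take c).length = c := by rw [List.length_take]; omega
      have := length_le_sum (P.1.take c) (fun x hx => hP1.2 x (List.take_subset _ _ hx))
      rw [hlt] at this; exact this
    have hkpos : 1 ≤ P.2.sum := by
      by_contra hcon; push_neg at hcon
      have hk0 : P.2.sum ≤ 0 := by omega
      have : ((c:ℤ)-1) * P.2.sum ≤ 0 :=
        mul_nonpos_of_nonneg_of_nonpos (by linarith) hk0
      linarith
    refine ⟨hA, ?_, hkpos⟩
    intro x hx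
    obtain ⟨a, tl, hP⟩ : ∃ a tl, P.1 = a :: tl := by
      cases hPc : P.1 with
      | nil => rw [hPc] at hlen; simp at hlen
      | cons a tl => exact ⟨a, tl, rfl⟩
    have hxa : x ≤ a := by
      rw [hP] at hx
      rcases List.mem_cons.mp hx with rfl | hx'
      · exact le_refl x
      · have hs := hP1.1
        rw [hP] at hs
        exact List.rel_of_pairwise_cons hs hx'
    have hak : a ≤ P.2.sum := by
      rcases lt_or_ge 0 (a + (((c:ℤ)-2) * P.2.sum + 1 - (P.1.take c).sum)) with hpa | hpa
      · have hmem : a ∈ P.1.take c := by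
          rw [hP, show c = (c-1)+1 by omega, List.take_succ_cons]
          simp
        have hmem2 : a + (((c:ℤ)-2) * P.2.sum + 1 - (P.1.take c).sum) ∈ (smlink c P).1 := by
          apply mem_smlink_fst
          · exact List.mem_append_left _ (List.mem_map_of_mem (List.mem_append_left _ hmem))
          · exact hpa
        have hble := hb _ hmem2
        rw [h2sum] at hble
        linarith
      · have htle : (P.1.take c).sum ≤ P.1.sum := by
          have h0 : 0 ≤ (P.1.drop c).sum :=
            List.sum_nonneg (fun y hy => le_of_lt (hP1.2 y (List.drop_subset _ _ hy)))
          linarith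
        linarith
    linarith

/-- Theorem doubling: let `(λ, μ)` be a codimension-`c` decoration with level
`k = ∑μⱼ > 1`, `S'` its minimal tight double link with shifts `p` and
`q = (c-2)(k+p)+1-(c-1)p-λ₁-⋯-λ_{c-1}-μ₁`. Then the double link of `D(λ, μ)` in
codimension `c+1`, first at the sublist `(λ₁, …, λ_c, μ₁)` (with shift
`p' = (c-1)k+1-λ₁-⋯-λ_c-μ₁`) and then at `(λ₁+p', …, λ_{c-1}+p', μ₁+p', k)`
(with shift `q'`), equals `D(S')`; and the identities `p' = p + k - μ₁`,
`q + μ₁ = λ_c`, and `p + q = p' + q'` hold. -/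
theorem stmt16 (c : ℕ) (hc : 2 ≤ c) (P : List ℤ × List ℤ) (k p q p' q' : ℤ)
    (hk : P.2.sum = k) (hk1 : 1 < k) (h : IsDecoration c P)
    (hp : p = ((c : ℤ) - 2) * k + 1 - (P.1.take c).sum)
    (hq : q = ((c : ℤ) - 2) * (k + p) + 1 - ((c : ℤ) - 1) * p
            - (P.1.take (c - 1)).sum - P.2.getD 0 0)
    (hp' : p' = ((c : ℤ) - 1) * k + 1 - (P.1.take c).sum - P.2.getD 0 0)
    (hq' : q' = ((c : ℤ) - 1) *
          ((linkAt (c + 1) (P.1.take c ++ [P.2.getD 0 0]) (doubling P)).2.sum)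
        + 1 - ((P.1.take (c - 1)).map (· + p') ++ [P.2.getD 0 0 + p', k]).sum) :
    linkAt (c + 1) ((P.1.take (c - 1)).map (· + p') ++ [P.2.getD 0 0 + p', k])
        (linkAt (c + 1) (P.1.take c ++ [P.2.getD 0 0]) (doubling P))
      = doubling (tightDouble c P)
    ∧ p' = p + k - P.2.getD 0 0
    ∧ q + P.2.getD 0 0 = P.1.getD (c - 1) 0
    ∧ p + q = p' + q' := by
  obtain ⟨hP1, hP2, n, hchain, hfin⟩ := h
  obtain ⟨l1, l2⟩ := P
  dsimp only at *
  -- μ is nonempty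
  obtain ⟨m0, mt, rfl⟩ : ∃ a tl, l2 = a :: tl := by
    cases hP2c : l2 with
    | nil => rw [hP2c] at hk; simp at hk; omega
    | cons a tl => exact ⟨a, tl, rfl⟩
  simp only [List.getD_cons_zero] at hq hp' hq' ⊢
  have hk' : m0 + mt.sum = k := by simpa using hk
  -- basic invariants from the decoration structure
  have hn0 : n ≠ 0 := by
    rintro rfl
    rw [Function.iterate_zero_apply] at hfin
    have h2 : (m0 :: mt : List ℤ) = [1] := congrArg Prod.snd hfin
    rw [h2] at hk; simp at hk; omega
  have hv : ValidLink c (l1, m0 :: mt) := by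
    simpa using hchain 0 (Nat.pos_of_ne_zero hn0)
  have hvraw := hv
  unfold ValidLink at hvraw
  dsimp only at hvraw
  rw [hk] at hvraw
  obtain ⟨hsum, hbd, hkpos⟩ := inv_lemma c hc n (l1, m0 :: mt) hP1 hP2 hchain hfin
  dsimp only at hsum hbd hkpos
  rw [hk] at hsum hbd
  have hc' : (2:ℤ) ≤ (c:ℤ) := by exact_mod_cast hc
  have hpos1 : ∀ x ∈ l1, (0:ℤ) < x := hP1.2
  have hpos2 : ∀ x ∈ (m0 :: mt : List ℤ), (0:ℤ) < x := hP2.2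
  have hm0pos : (0:ℤ) < m0 := hpos2 m0 (by simp)
  have hmtpos : ∀ x ∈ mt, (0:ℤ) < x := fun x hx => hpos2 x (List.mem_cons_of_mem _ hx)
  have hm0k : m0 ≤ k := by
    have : (0:ℤ) ≤ mt.sum := List.sum_nonneg (fun x hx => le_of_lt (hmtpos x hx))
    linarith
  -- length ≥ c
  have hlen : c ≤ l1.length := by
    by_contra hcon; push_neg at hcon
    rw [List.take_of_length_le (le_of_lt hcon)] at hvraw
    rw [List.getD_eq_default _ _ (by omega)] at hvraw
    linarith
  have hc1len : c - 1 < l1.length := by omega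
  have htake : l1.take c = l1.take (c-1) ++ [l1.getD (c-1) 0] := by
    conv_lhs => rw [show c = (c-1)+1 by omega]
    rw [List.take_succ, List.getElem?_eq_getElem hc1len, List.getD_eq_getElem _ _ hc1len]
    rfl
  have hsplit : l1 = l1.take (c-1) ++ [l1.getD (c-1) 0] ++ l1.drop c := by
    conv_lhs => rw [← List.take_append_drop c l1]
    rw [htake]
  have htsum : (l1.take c).sum = (l1.take (c-1)).sum + l1.getD (c-1) 0 := by
    have := take_sum_succ l1 (c-1)
    rwa [show c - 1 + 1 = c by omega] at this
  have hzpos : (0:ℤ) < l1.getD (c-1) 0 := by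
    apply hpos1
    rw [List.getD_eq_getElem _ _ hc1len]
    exact List.getElem_mem _
  have halz : ∀ x ∈ l1.take (c-1), l1.getD (c-1) 0 ≤ x := by
    intro x hx
    have hs := hP1.1
    rw [hsplit] at hs
    have h1 := (List.pairwise_append.mp ((List.pairwise_append.mp hs).1)).2.2
    exact h1 x hx _ (by simp)
  have hallen : (l1.take (c-1)).length = c - 1 := by
    rw [List.length_take]; omega
  have hcast : ((c - 1 : ℕ) : ℤ) = (c:ℤ) - 1 := by omega
  have hrestpos : ∀ x ∈ l1.drop c, (0:ℤ) < x := fun x hx => hpos1 x (List.drop_subset _ _ hx)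
  have hrestsum : (l1.drop c).sum = l1.sum - (l1.take c).sum := by
    have := List.sum_take_add_sum_drop l1 c; linarith
  have hRSkp : (l1.drop c).sum = k + p := by
    rw [hrestsum]; linarith [hsum, hp]
  have hzp : (0:ℤ) ≤ l1.getD (c-1) 0 + p := by
    rw [hp]; linarith [hvraw]
  -- conj 2 and 3
  have hcj2 : p' = p + k - m0 := by rw [hp, hp']; ring
  have hcj3 : q + m0 = l1.getD (c-1) 0 := by
    rw [hq, hp]; linarith [htsum]
  -- z + p' > 0
  have hm0p' : (0:ℤ) ≤ m0 + p' := by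
    have h0 : (0:ℤ) ≤ (l1.drop c).sum :=
      List.sum_nonneg (fun x hx => le_of_lt (hrestpos x hx))
    linarith [hRSkp, hcj2]
  have hzp' : (0:ℤ) < l1.getD (c-1) 0 + p' := by
    rcases lt_or_eq_of_le hzp with hlt | heq
    · linarith [hcj2, hm0k]
    · -- z + p = 0 ; show m0 < k
      rcases lt_or_eq_of_le hm0k with hlt' | heq'
      · linarith [hcj2]
      · exfalso
        -- m0 = k : then k is a part of smlink and invariant forces p ≥ 0
        have hQpart := smlink_isPartition c (l1, m0 :: mt) hP1
        have hchainQ : ∀ m < n - 1, ValidLink c ((smlink c)^[m] (smlink c (l1, m0 :: mt))) := by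
          intro m hm
          have := hchain (m+1) (by omega)
          rwa [Function.iterate_succ_apply] at this
        have hfinQ : (smlink c)^[n-1] (smlink c (l1, m0 :: mt)) = (List.replicate c 1, [1]) := by
          rw [← Function.iterate_succ_apply, show (n-1).succ = n by omega]
          exact hfin
        obtain ⟨_, hbQ, _⟩ := inv_lemma c hc (n-1) (smlink c (l1, m0 :: mt))
          hQpart.1 hQpart.2 hchainQ hfinQ
        have hkmem : k ∈ (smlink c (l1, m0 :: mt)).1 := by
          apply mem_smlink_fst
          · apply List.mem_append_right
            rw [heq']
            exact List.mem_cons_self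
          · omega
        have hQ2 : (smlink c (l1, m0 :: mt)).2 = l1.drop c := by
          have e2 : (smlink c (l1, m0 :: mt)).2 = strip (l1.drop c) := rfl
          rw [e2, strip_eq_self hrestpos]
        have := hbQ k hkmem
        rw [hQ2, hRSkp] at this
        linarith
  -- global facts about the smlink components
  have hQ2 : (smlink c (l1, m0 :: mt)).2 = l1.drop c := by
    have e2 : (smlink c (l1, m0 :: mt)).2 = strip (l1.drop c) := rfl
    rw [e2, strip_eq_self hrestpos]
  have hshp : ((c:ℤ) - 2) * (m0 :: mt : List ℤ).sum + 1 - (l1.take c).sum = p := by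
    rw [hk]; exact hp.symm
  have hQ1perm : (smlink c (l1, m0 :: mt)).1.Perm
      ((strip ((l1.take (c-1)).map (· + p)) ++ strip [l1.getD (c-1) 0 + p]) ++ (m0 :: mt)) := by
    have e1 : (smlink c (l1, m0 :: mt)).1 = strip (rsort
        ((l1.take c ++ List.replicate (c - l1.length) 0).map
          (· + (((c:ℤ) - 2) * (m0 :: mt : List ℤ).sum + 1 - (l1.take c).sum)) ++ (m0 :: mt))) := rfl
    rw [e1, hshp, Nat.sub_eq_zero_of_le hlen, List.replicate_zero, List.append_nil,
      htake, List.map_append]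
    rw [show List.map (· + p) [l1.getD (c-1) 0] = [l1.getD (c-1) 0 + p] from rfl]
    refine (strip_perm (rsort_perm _)).trans ?_
    rw [strip_append, strip_append, strip_eq_self hpos2]
  -- the first double-link step L1
  have hdbl2 : (doubling (l1, m0 :: mt)).2 = [k] := by
    have e2 : (doubling (l1, m0 :: mt)).2 = [(m0 :: mt : List ℤ).sum] := rfl
    rw [e2, hk]
  have hdbl2sum : (doubling (l1, m0 :: mt)).2.sum = k := by rw [hdbl2]; simp
  have hL12perm : (linkAt (c+1) (l1.take c ++ [m0]) (doubling (l1, m0 :: mt))).2.Perm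
      (l1.drop c ++ mt) := by
    have e : (linkAt (c+1) (l1.take c ++ [m0]) (doubling (l1, m0 :: mt))).2
        = strip ((rsort (l1 ++ (m0 :: mt))).diff (l1.take c ++ [m0])) := rfl
    rw [e]
    have hperm : (rsort (l1 ++ (m0 :: mt))).Perm
        ((l1.take c ++ [m0]) ++ (l1.drop c ++ mt)) := by
      refine (rsort_perm _).trans ?_
      refine Multiset.coe_eq_coe.mp ?_
      conv_lhs => rw [← List.take_append_drop c l1]
      simp only [← Multiset.coe_add, ← Multiset.cons_coe, ← Multiset.singleton_add,
        Multiset.coe_nil, add_zero]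
      ac_rfl
    have hdiff : ((rsort (l1 ++ (m0 :: mt))).diff (l1.take c ++ [m0])).Perm (l1.drop c ++ mt) := by
      refine (hperm.diff_right _).trans ?_
      refine Multiset.coe_eq_coe.mp ?_
      rw [← Multiset.coe_sub, ← Multiset.coe_add]
      exact add_tsub_cancel_left _ _
    refine (strip_perm hdiff).trans ?_
    rw [strip_eq_self]
    intro x hx
    rcases List.mem_append.mp hx with hx | hx
    exacts [hrestpos x hx, hmtpos x hx]
  have hL12sum : (linkAt (c+1) (l1.take c ++ [m0]) (doubling (l1, m0 :: mt))).2.sum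
      = (l1.drop c).sum + mt.sum := by
    rw [hL12perm.sum_eq, List.sum_append]
  -- conjunct 4
  have hBsum : ((l1.take (c-1)).map (· + p') ++ [m0 + p', k]).sum
      = (l1.take (c-1)).sum + ((c:ℤ)-1) * p' + (m0 + p') + k := by
    rw [List.sum_append, map_add_sum, hallen, hcast]
    simp only [List.sum_cons, List.sum_nil]
    ring
  have hq'v : q' = l1.getD (c-1) 0 - k := by
    rw [hq', hL12sum, hBsum, hRSkp, hcj2, hp,
      show mt.sum = k - m0 by linarith [hk'], htsum]
    ring
  have hcj4 : p + q = p' + q' := by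
    rw [hq'v, hcj2, hq, hp, htsum]; ring
  -- shift of the first big link equals p'
  have hAsum : (l1.take c ++ [m0]).sum = (l1.take c).sum + m0 := by
    rw [List.sum_append]; simp
  have hshA : ((↑(c+1) : ℤ) - 2) * (doubling (l1, m0 :: mt)).2.sum + 1
      - (l1.take c ++ [m0]).sum = p' := by
    rw [hdbl2sum, hAsum, hp']; push_cast; ring
  -- L1.1
  have hstripAL' : strip ((l1.take (c-1)).map (· + p')) = (l1.take (c-1)).map (· + p') := by
    apply strip_eq_self
    intro x hx
    obtain ⟨y, hy, rfl⟩ := List.mem_map.mp hx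
    have := halz y hy
    linarith [hzp']
  have hL11perm : (linkAt (c+1) (l1.take c ++ [m0]) (doubling (l1, m0 :: mt))).1.Perm
      ((((l1.take (c-1)).map (· + p') ++ [l1.getD (c-1) 0 + p']) ++ strip [m0 + p']) ++ [k]) := by
    have e : (linkAt (c+1) (l1.take c ++ [m0]) (doubling (l1, m0 :: mt))).1
        = strip (rsort ((l1.take c ++ [m0]).map
            (· + (((↑(c+1) : ℤ) - 2) * (doubling (l1, m0 :: mt)).2.sum + 1
              - (l1.take c ++ [m0]).sum)) ++ (doubling (l1, m0 :: mt)).2)) := rfl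
    rw [e, hshA, hdbl2, htake, List.map_append, List.map_append]
    rw [show List.map (· + p') [l1.getD (c-1) 0] = [l1.getD (c-1) 0 + p'] from rfl]
    rw [show List.map (· + p') [m0] = [m0 + p'] from rfl]
    refine (strip_perm (rsort_perm _)).trans ?_
    rw [strip_append, strip_append, strip_append, hstripAL',
      strip_singleton_pos hzp', strip_singleton_pos (by omega : (0:ℤ) < k)]
  have hL11coe : (↑(linkAt (c+1) (l1.take c ++ [m0]) (doubling (l1, m0 :: mt))).1 : Multiset ℤ)
      = ↑((l1.take (c-1)).map (· + p')) + {l1.getD (c-1) 0 + p'} + ↑(strip [m0 + p']) + {k} := by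
    rw [Multiset.coe_eq_coe.mpr hL11perm]
    simp only [← Multiset.coe_add, Multiset.coe_singleton]
  have hBcoe : (↑((l1.take (c-1)).map (· + p') ++ [m0 + p', k]) : Multiset ℤ)
      = ↑((l1.take (c-1)).map (· + p')) + {m0 + p'} + {k} := by
    simp only [← Multiset.coe_add, ← Multiset.cons_coe, ← Multiset.singleton_add,
      Multiset.coe_nil, add_zero]
    ac_rfl
  have hdiff2 : (linkAt (c+1) (l1.take c ++ [m0]) (doubling (l1, m0 :: mt))).1.diff
      ((l1.take (c-1)).map (· + p') ++ [m0 + p', k]) = [l1.getD (c-1) 0 + p'] := by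
    rw [← List.perm_singleton]
    refine Multiset.coe_eq_coe.mp ?_
    rw [← Multiset.coe_sub, hL11coe, hBcoe, Multiset.coe_singleton]
    generalize (↑((l1.take (c-1)).map (· + p')) : Multiset ℤ) = M
    rcases lt_or_eq_of_le hm0p' with hpos | hzero
    · rw [strip_singleton_pos hpos, Multiset.coe_singleton]
      rw [show M + {l1.getD (c-1) 0 + p'} + {m0 + p'} + {k}
          = (M + {m0 + p'} + {k}) + {l1.getD (c-1) 0 + p'} by ac_rfl]
      exact add_tsub_cancel_left _ _
    · rw [strip_singleton_nonpos (by omega), Multiset.coe_nil, add_zero, ← hzero]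
      rw [show M + {l1.getD (c-1) 0 + p'} + {k} = (M + {k}) + {l1.getD (c-1) 0 + p'} by ac_rfl,
        show M + ({0} : Multiset ℤ) + {k} = (M + {k}) + {0} by ac_rfl,
        add_tsub_add_eq_tsub_left, Multiset.sub_singleton, Multiset.erase_of_notMem]
      rw [Multiset.mem_singleton]
      intro hcon
      rw [← hcon] at hzp'
      exact absurd hzp' (lt_irrefl 0)
  have hLHS2 : (linkAt (c + 1) ((l1.take (c - 1)).map (· + p') ++ [m0 + p', k])
        (linkAt (c + 1) (l1.take c ++ [m0]) (doubling (l1, m0 :: mt)))).2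
      = [l1.getD (c-1) 0 + p'] := by
    have e : (linkAt (c + 1) ((l1.take (c - 1)).map (· + p') ++ [m0 + p', k])
          (linkAt (c + 1) (l1.take c ++ [m0]) (doubling (l1, m0 :: mt)))).2
        = strip ((linkAt (c+1) (l1.take c ++ [m0]) (doubling (l1, m0 :: mt))).1.diff
            ((l1.take (c-1)).map (· + p') ++ [m0 + p', k])) := rfl
    rw [e, hdiff2, strip_singleton_pos hzp']
  -- tightDouble components
  have etd : tightDouble c (l1, m0 :: mt)
      = linkAt c ((l1.take (c-1)).map (· + p) ++ [m0]) (smlink c (l1, m0 :: mt)) := by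
    have e : tightDouble c (l1, m0 :: mt)
        = linkAt c ((l1.take (c-1)).map
            (· + (((c:ℤ) - 2) * (m0 :: mt : List ℤ).sum + 1 - (l1.take c).sum)) ++ [m0])
          (smlink c (l1, m0 :: mt)) := rfl
    rw [e, hshp]
  have hQ1coe : (↑(smlink c (l1, m0 :: mt)).1 : Multiset ℤ)
      = ↑(strip ((l1.take (c-1)).map (· + p))) + ↑(strip [l1.getD (c-1) 0 + p])
        + ({m0} + ↑mt) := by
    rw [Multiset.coe_eq_coe.mpr hQ1perm]
    simp only [← Multiset.coe_add, ← Multiset.cons_coe, ← Multiset.singleton_add]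
  have hALp_split : (↑((l1.take (c-1)).map (· + p)) : Multiset ℤ)
      = ↑(strip ((l1.take (c-1)).map (· + p)))
        + ↑(((l1.take (c-1)).map (· + p)).filter (fun x => !decide (0 < x))) := by
    have hfp := List.filter_append_perm (fun x => decide (0 < x)) ((l1.take (c-1)).map (· + p))
    have h2 := Multiset.coe_eq_coe.mpr hfp
    rw [← Multiset.coe_add] at h2
    exact h2.symm
  have htddiff : (↑((smlink c (l1, m0 :: mt)).1.diff
        ((l1.take (c-1)).map (· + p) ++ [m0])) : Multiset ℤ)
      = ↑(strip [l1.getD (c-1) 0 + p]) + ↑mt := by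
    rw [← Multiset.coe_sub, hQ1coe]
    rw [show (↑((l1.take (c-1)).map (· + p) ++ [m0]) : Multiset ℤ)
        = ↑((l1.take (c-1)).map (· + p)) + {m0} from by
      simp only [← Multiset.coe_add, Multiset.coe_singleton]]
    rw [hALp_split]
    rw [show ↑(strip ((l1.take (c-1)).map (· + p))) + ↑(strip [l1.getD (c-1) 0 + p])
          + ({m0} + (↑mt : Multiset ℤ))
        = (↑(strip ((l1.take (c-1)).map (· + p))) + {m0})
          + (↑(strip [l1.getD (c-1) 0 + p]) + ↑mt) from by ac_rfl]
    rw [show ↑(strip ((l1.take (c-1)).map (· + p)))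
          + (↑(((l1.take (c-1)).map (· + p)).filter (fun x => !decide (0 < x))) : Multiset ℤ)
          + {m0}
        = (↑(strip ((l1.take (c-1)).map (· + p))) + {m0})
          + ↑(((l1.take (c-1)).map (· + p)).filter (fun x => !decide (0 < x))) from by ac_rfl]
    rw [add_tsub_add_eq_tsub_left]
    apply sub_zeros
    · intro a ha
      rw [Multiset.mem_coe, List.mem_filter] at ha
      obtain ⟨ha1, ha2⟩ := ha
      obtain ⟨y, hy, rfl⟩ := List.mem_map.mp ha1
      have h3 := halz y hy
      simp only [Bool.not_eq_true', decide_eq_false_iff_not, not_lt] at ha2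
      omega
    · intro hmem
      rw [Multiset.mem_add] at hmem
      rcases hmem with hmem | hmem
      · rw [Multiset.mem_coe, mem_strip] at hmem
        exact absurd hmem.2 (lt_irrefl 0)
      · rw [Multiset.mem_coe] at hmem
        exact absurd (hmtpos 0 hmem) (lt_irrefl 0)
  have htd2 : (tightDouble c (l1, m0 :: mt)).2.Perm (strip [l1.getD (c-1) 0 + p] ++ mt) := by
    rw [etd]
    have e : (linkAt c ((l1.take (c-1)).map (· + p) ++ [m0]) (smlink c (l1, m0 :: mt))).2
        = strip ((smlink c (l1, m0 :: mt)).1.diff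
            ((l1.take (c-1)).map (· + p) ++ [m0])) := rfl
    rw [e]
    have hperm : ((smlink c (l1, m0 :: mt)).1.diff
          ((l1.take (c-1)).map (· + p) ++ [m0])).Perm
        (strip [l1.getD (c-1) 0 + p] ++ mt) := by
      refine Multiset.coe_eq_coe.mp ?_
      rw [htddiff, ← Multiset.coe_add]
    refine (strip_perm hperm).trans ?_
    rw [strip_eq_self]
    intro x hx
    rcases List.mem_append.mp hx with hx | hx
    · exact (mem_strip.mp hx).2
    · exact hmtpos x hx
  have hstripz : (strip [l1.getD (c-1) 0 + p]).sum = l1.getD (c-1) 0 + p := by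
    rcases lt_or_eq_of_le hzp with hlt | heq0
    · rw [strip_singleton_pos hlt]; simp
    · rw [strip_singleton_nonpos (by omega), List.sum_nil]
      exact heq0
  have htd2sumv : (tightDouble c (l1, m0 :: mt)).2.sum = l1.getD (c-1) 0 + p' := by
    rw [htd2.sum_eq, List.sum_append, hstripz]
    linarith [hk', hcj2]
  -- td.1
  have hsh2 : ((c:ℤ) - 2) * (smlink c (l1, m0 :: mt)).2.sum + 1
      - ((l1.take (c-1)).map (· + p) ++ [m0]).sum = q := by
    rw [hQ2, hRSkp, List.sum_append, map_add_sum, hallen, hcast]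
    simp only [List.sum_cons, List.sum_nil]
    rw [hq]; ring
  have hmappq : ((l1.take (c-1)).map (· + p)).map (· + q)
      = (l1.take (c-1)).map (· + (p + q)) := by
    rw [List.map_map]
    exact List.map_congr_left (fun a _ => by simp only [Function.comp_apply]; ring)
  have htd1 : (tightDouble c (l1, m0 :: mt)).1.Perm
      ((strip ((l1.take (c-1)).map (· + (p + q))) ++ [l1.getD (c-1) 0]) ++ l1.drop c) := by
    rw [etd]
    have e : (linkAt c ((l1.take (c-1)).map (· + p) ++ [m0]) (smlink c (l1, m0 :: mt))).1
        = strip (rsort ((((l1.take (c-1)).map (· + p) ++ [m0]).map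
            (· + (((c:ℤ) - 2) * (smlink c (l1, m0 :: mt)).2.sum + 1
              - ((l1.take (c-1)).map (· + p) ++ [m0]).sum)))
            ++ (smlink c (l1, m0 :: mt)).2)) := rfl
    rw [e, hsh2, hQ2, List.map_append, hmappq]
    rw [show List.map (· + q) [m0] = [l1.getD (c-1) 0] from by
      simp only [List.map_cons, List.map_nil]
      rw [show m0 + q = l1.getD (c-1) 0 from by linarith [hcj3]]]
    refine (strip_perm (rsort_perm _)).trans ?_
    rw [strip_append, strip_append, strip_eq_self hrestpos, strip_singleton_pos hzpos]
  -- LHS first component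
  have hsh3 : ((↑(c+1) : ℤ) - 2)
        * (linkAt (c + 1) (l1.take c ++ [m0]) (doubling (l1, m0 :: mt))).2.sum
      + 1 - ((l1.take (c - 1)).map (· + p') ++ [m0 + p', k]).sum = q' := by
    push_cast
    linarith [hq']
  have hmapp'q' : ((l1.take (c-1)).map (· + p')).map (· + q')
      = (l1.take (c-1)).map (· + (p + q)) := by
    rw [List.map_map]
    exact List.map_congr_left (fun a _ => by simp only [Function.comp_apply]; linarith [hcj4])
  have hLHS1 : (linkAt (c + 1) ((l1.take (c - 1)).map (· + p') ++ [m0 + p', k])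
        (linkAt (c + 1) (l1.take c ++ [m0]) (doubling (l1, m0 :: mt)))).1.Perm
      (strip (((l1.take (c-1)).map (· + (p + q))
        ++ ([l1.getD (c-1) 0 + p] ++ [l1.getD (c-1) 0])) ++ (l1.drop c ++ mt))) := by
    have e : (linkAt (c + 1) ((l1.take (c - 1)).map (· + p') ++ [m0 + p', k])
          (linkAt (c + 1) (l1.take c ++ [m0]) (doubling (l1, m0 :: mt)))).1
        = strip (rsort ((((l1.take (c - 1)).map (· + p') ++ [m0 + p', k]).map
            (· + (((↑(c+1) : ℤ) - 2)
                * (linkAt (c + 1) (l1.take c ++ [m0]) (doubling (l1, m0 :: mt))).2.sum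
              + 1 - ((l1.take (c - 1)).map (· + p') ++ [m0 + p', k]).sum)))
            ++ (linkAt (c + 1) (l1.take c ++ [m0]) (doubling (l1, m0 :: mt))).2)) := rfl
    rw [e, hsh3, List.map_append, hmapp'q']
    rw [show List.map (· + q') [m0 + p', k] = [l1.getD (c-1) 0 + p] ++ [l1.getD (c-1) 0] from by
      simp only [List.map_cons, List.map_nil]
      rw [show m0 + p' + q' = l1.getD (c-1) 0 + p from by linarith [hcj2, hcj3, hcj4],
        show k + q' = l1.getD (c-1) 0 from by linarith [hcj2, hcj3, hcj4]]
      rfl]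
    exact strip_perm ((rsort_perm _).trans ((List.Perm.refl _).append hL12perm))
  have hSB : strip (((l1.take (c-1)).map (· + (p + q))
        ++ ([l1.getD (c-1) 0 + p] ++ [l1.getD (c-1) 0])) ++ (l1.drop c ++ mt))
      = (strip ((l1.take (c-1)).map (· + (p + q)))
          ++ (strip [l1.getD (c-1) 0 + p] ++ [l1.getD (c-1) 0])) ++ (l1.drop c ++ mt) := by
    rw [strip_append, strip_append, strip_append, strip_append,
      strip_singleton_pos hzpos, strip_eq_self hrestpos, strip_eq_self hmtpos]
  refine ⟨?_, hcj2, hcj3, hcj4⟩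
  have edbl : doubling (tightDouble c (l1, m0 :: mt))
      = (rsort ((tightDouble c (l1, m0 :: mt)).1 ++ (tightDouble c (l1, m0 :: mt)).2),
         [(tightDouble c (l1, m0 :: mt)).2.sum]) := rfl
  rw [edbl, Prod.ext_iff]
  constructor
  · -- first components
    refine (fun hp hs => List.Perm.eq_of_pairwise (fun a b _ _ h1 h2 => le_antisymm h2 h1) hs (rsort_sorted _) hp) ?_ ?_
    · refine hLHS1.trans ?_
      rw [hSB]
      refine List.Perm.trans ?_ ((rsort_perm _).symm)
      refine List.Perm.trans ?_ ((htd1.append htd2).symm)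
      refine Multiset.coe_eq_coe.mp ?_
      simp only [← Multiset.coe_add]
      ac_rfl
    · have e : (linkAt (c + 1) ((l1.take (c - 1)).map (· + p') ++ [m0 + p', k])
            (linkAt (c + 1) (l1.take c ++ [m0]) (doubling (l1, m0 :: mt)))).1
          = strip (rsort ((((l1.take (c - 1)).map (· + p') ++ [m0 + p', k]).map
              (· + (((↑(c+1) : ℤ) - 2)
                  * (linkAt (c + 1) (l1.take c ++ [m0]) (doubling (l1, m0 :: mt))).2.sum
                + 1 - ((l1.take (c - 1)).map (· + p') ++ [m0 + p', k]).sum)))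
              ++ (linkAt (c + 1) (l1.take c ++ [m0]) (doubling (l1, m0 :: mt))).2)) := rfl
      rw [e]
      exact strip_sorted (rsort_sorted _)
  · -- second components
    rw [hLHS2, htd2sumv]
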